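/- Suppose a Lie algebra homomorphism σ : W_> → Diff¹(ℂ((z))) satisfies: for every i ≥ -1 there exist r_i, s_i, t_i ∈ ℂ with σ(L_i) = r_i·1 + s_i·z^{-(2i+3)} + t_i·z^{-2i}(z∂_z + (1-2i)/2), and t_0 ≠ 0, and σ arises from data (h,c,b) via σ(L_i) = -(h^{i+1}/h')∂_z - (i+1)c·h^i + (h^{i+1}/h')b with h'(z) invertible. Then there exist s, t ∈ ℂ, t ≠ 0, such that σ(L_i) = t^i((1/2)z^{-2i}(z∂_z + (1-2i)/2) + s·z^{-2i-3}) for all i ≥ -1; in particular h(z) = t·z^{-2}, c = 1/2, r_i = 0 for all i, and b(z) = -(3/2)z^{-1} - 2s·z^{-4}. -/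

import Mathlib

/-- The operator `z ∂_z` on `ℂ((z))`. -/
noncomputable def zDz : LaurentSeries ℂ →ₗ[ℂ] LaurentSeries ℂ where
  toFun f :=
    { coeff := fun n => (n : ℂ) * f.coeff n
      isPWO_support' := f.isPWO_support'.mono (by
        intro n hn
        simp only [Function.mem_support] at hn ⊢
        intro h
        exact hn (by rw [h, mul_zero])) }
  map_add' f g := by ext n; simp [mul_add]
  map_smul' c f := by ext n; simp; ring

/-- Multiplication by `z^k` on `ℂ((z))`. -/
noncomputable def zPow (k : ℤ) : LaurentSeries ℂ →ₗ[ℂ] LaurentSeries ℂ where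
  toFun f :=
    { coeff := fun n => f.coeff (n - k)
      isPWO_support' := by
        refine (f.isPWO_support'.image_of_monotone
          (f := fun m => m + k) (fun a b hab => by dsimp; omega)).mono ?_
        intro n hn
        exact ⟨n - k, hn, by dsimp; ring⟩ }
  map_add' f g := by ext n; simp
  map_smul' c f := by ext n; simp

/-- The derivative `∂_z` on `ℂ((z))`. -/
noncomputable def Dz : LaurentSeries ℂ →ₗ[ℂ] LaurentSeries ℂ where
  toFun f :=
    { coeff := fun n => ((n + 1 : ℤ) : ℂ) * f.coeff (n + 1)
      isPWO_support' := by
        refine (f.isPWO_support'.image_of_monotone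
          (f := fun m => m - 1) (fun a b hab => by dsimp; omega)).mono ?_
        intro n hn
        simp only [Function.mem_support] at hn
        refine ⟨n + 1, fun h => hn (by rw [h, mul_zero]), by dsimp; ring⟩ }
  map_add' f g := by ext n; simp [mul_add]
  map_smul' c f := by ext n; simp; ring

/-- Multiplication by a fixed Laurent series `g`. -/
noncomputable def mulOp (g : LaurentSeries ℂ) : LaurentSeries ℂ →ₗ[ℂ] LaurentSeries ℂ where
  toFun f := g * f
  map_add' f1 f2 := mul_add g f1 f2
  map_smul' c f := by
    have h : ∀ x : LaurentSeries ℂ, c • x = (HahnSeries.single (0 : ℤ) c) * x :=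
      fun x => (HahnSeries.single_zero_mul_eq_smul).symm
    simp only [RingHom.id_apply, h]
    ring

/-- The operator `σ(L_i) = -(h^{i+1}/h') ∂_z - (i+1) c h^i + (h^{i+1}/h') b`. -/
noncomputable def sigmaHCB (h : LaurentSeries ℂ) (c : ℂ) (b : LaurentSeries ℂ)
    (i : ℤ) : LaurentSeries ℂ →ₗ[ℂ] LaurentSeries ℂ :=
  (-(1 : ℂ)) • (mulOp (h ^ (i + 1) / Dz h) ∘ₗ Dz)
    - (((i + 1 : ℤ) : ℂ) * c) • mulOp (h ^ i)
    + mulOp ((h ^ (i + 1) / Dz h) * b)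


/-!
Both descriptions of `σ(L_i)` are first-order operators `g ∂_z + m`, and such an operator
determines `g` and `m` (apply it to `1` and to `z`). Comparing first-order parts gives
`h^{i+1}/h' = -t_i z^{1-2i}`; the cases `i = -1, 0` force `h = T z^{-2}`, and then
`h^{i+1}/h' = -(T^i/2) z^{1-2i}`, so `t_i = T^i/2`. Comparing zeroth-order parts at `i = 0`
determines `z b`, after which the zeroth-order part at `i` is `T^i z^{-2i}` times an explicit
series; reading off its coefficients at `i = ±1` gives `c = 1/2` and `r_0 = 0`, and in general
`r_i = 0` and `s_i = T^i s_0`.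
-/

open HahnSeries

theorem HahnSeries.smul_single {Γ R S : Type*} [PartialOrder Γ] [Zero R] [SMulZeroClass S R]
    (c : S) (a : Γ) (r : R) : c • single a r = single a (c • r) := by
  ext b
  by_cases hb : b = a <;> simp [hb]

theorem HahnSeries.single_zpow {Γ R : Type*} [AddCommGroup Γ] [LinearOrder Γ]
    [IsOrderedAddMonoid Γ] [Field R] (a : Γ) (r : R) (n : ℤ) :
    single a r ^ n = single (n • a) (r ^ n) := by
  obtain ⟨m, rfl | rfl⟩ := n.eq_nat_or_neg
  · simp [single_pow]
  · simp [single_pow, inv_single]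

lemma zPow_apply (k : ℤ) (f : LaurentSeries ℂ) : zPow k f = single k 1 * f := by
  ext n
  simp [zPow, coeff_single_mul]

lemma zDz_apply (f : LaurentSeries ℂ) : zDz f = single 1 1 * Dz f := by
  ext n
  simp [zDz, Dz, coeff_single_mul]

lemma Dz_single (n : ℤ) (a : ℂ) :
    Dz (single n a : LaurentSeries ℂ) = single (n - 1) (n * a) := by
  ext m
  simp only [Dz, LinearMap.coe_mk, AddHom.coe_mk, coeff_single]
  by_cases hm : m = n - 1
  · simp [hm]
  · simp [hm, show m + 1 ≠ n by omega]

lemma Dz_one : Dz (1 : LaurentSeries ℂ) = 0 := by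
  simpa using Dz_single 0 1

lemma Dz_X : Dz (single 1 1 : LaurentSeries ℂ) = 1 := by
  simpa using Dz_single 1 1

noncomputable def firstOrderOp (g m : LaurentSeries ℂ) : LaurentSeries ℂ →ₗ[ℂ] LaurentSeries ℂ :=
  mulOp g ∘ₗ Dz + mulOp m

lemma firstOrderOp_apply (g m f : LaurentSeries ℂ) :
    firstOrderOp g m f = g * Dz f + m * f := rfl

lemma firstOrderOp_inj {g m g' m' : LaurentSeries ℂ} :
    firstOrderOp g m = firstOrderOp g' m' ↔ g = g' ∧ m = m' := by
  refine ⟨fun h => ?_, fun ⟨hg, hm⟩ => hg ▸ hm ▸ rfl⟩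
  have h₁ := LinearMap.congr_fun h 1
  have hX := LinearMap.congr_fun h (single 1 1)
  simp only [firstOrderOp_apply, Dz_one, Dz_X, mul_zero, mul_one, zero_add] at h₁ hX
  subst h₁
  exact ⟨add_right_cancel hX, rfl⟩

noncomputable def sigmaRST (i : ℤ) (r s t : ℂ) : LaurentSeries ℂ →ₗ[ℂ] LaurentSeries ℂ :=
  r • LinearMap.id + s • zPow (-(2 * i + 3))
    + t • (zPow (-2 * i) ∘ₗ (zDz + (((1 - 2 * i : ℤ) : ℂ) / 2) • LinearMap.id))

lemma sigmaRST_eq_firstOrderOp (i : ℤ) (r s t : ℂ) :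
    sigmaRST i r s t = firstOrderOp (single (1 - 2 * i) t)
      (single 0 r + single (-(2 * i + 3)) s + single (-2 * i) (t * ((1 - 2 * i : ℤ) : ℂ) / 2)) := by
  ext1 f
  simp only [sigmaRST, firstOrderOp_apply, LinearMap.add_apply, LinearMap.smul_apply,
    LinearMap.comp_apply, LinearMap.id_apply, zPow_apply, zDz_apply, ← single_zero_mul_eq_smul]
  simp only [mul_add, add_mul, ← mul_assoc, single_mul_single]
  ring_nf

lemma sigmaHCB_eq_firstOrderOp (h : LaurentSeries ℂ) (c : ℂ) (b : LaurentSeries ℂ) (i : ℤ) :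
    sigmaHCB h c b i = firstOrderOp (-(h ^ (i + 1) / Dz h))
      (h ^ (i + 1) / Dz h * b - (((i + 1 : ℤ) : ℂ) * c) • h ^ i) := by
  ext1 f
  simp only [sigmaHCB, firstOrderOp_apply, LinearMap.add_apply, LinearMap.sub_apply,
    LinearMap.smul_apply, LinearMap.comp_apply, mulOp, LinearMap.coe_mk, AddHom.coe_mk,
    neg_one_smul]
  simp only [← single_zero_mul_eq_smul]
  ring

lemma sigmaHCB_eq_sigmaRST_iff {h : LaurentSeries ℂ} {c : ℂ} {b : LaurentSeries ℂ} {i : ℤ}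
    {r s t : ℂ} :
    sigmaHCB h c b i = sigmaRST i r s t ↔
      -(h ^ (i + 1) / Dz h) = single (1 - 2 * i) t ∧
      h ^ (i + 1) / Dz h * b - (((i + 1 : ℤ) : ℂ) * c) • h ^ i
        = single 0 r + single (-(2 * i + 3)) s + single (-2 * i) (t * ((1 - 2 * i : ℤ) : ℂ) / 2) := by
  rw [sigmaHCB_eq_firstOrderOp, sigmaRST_eq_firstOrderOp, firstOrderOp_inj]

lemma zpow_div_Dz_single_neg_two {T : ℂ} (hT : T ≠ 0) (i : ℤ) :
    single (-2) T ^ (i + 1) / Dz (single (-2) T) = single (1 - 2 * i) (-(T ^ i / 2)) := by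
  rw [Dz_single, single_zpow, single_div_single, zpow_add_one₀ hT, smul_eq_mul]
  congr 2
  · ring
  · push_cast
    field_simp

lemma exists_eq_single_neg_two {h : LaurentSeries ℂ} (hd : Dz h ≠ 0) {t : ℤ → ℂ}
    (ht : ∀ i : ℤ, -1 ≤ i → -(h ^ (i + 1) / Dz h) = single (1 - 2 * i) (t i)) :
    ∃ T ≠ 0, h = single (-2) T ∧ ∀ i : ℤ, -1 ≤ i → t i = T ^ i / 2 := by
  have hinv : (Dz h)⁻¹ = single 3 (-t (-1)) := by
    simpa [single_neg, neg_eq_iff_eq_neg] using ht (-1) le_rfl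
  have hdiv : h / Dz h = single 1 (-t 0) := by
    simpa [single_neg, neg_eq_iff_eq_neg] using ht 0 (by norm_num)
  have hh : h = single (-2) (t 0 / t (-1)) := by
    rw [← div_mul_cancel₀ h hd, hdiv, ← inv_inv (Dz h), hinv, inv_single, single_mul_single]
    norm_num [div_eq_mul_inv]
  have hT : t 0 / t (-1) ≠ 0 := fun hT => hd (by rw [hh, hT, single_eq_zero, map_zero])
  refine ⟨_, hT, hh, fun i hi => ?_⟩
  have hti := ht i hi
  rw [hh, zpow_div_Dz_single_neg_two hT, single_neg, neg_neg] at hti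
  exact (single_injective _ hti).symm

lemma single_mul_eq_of_zerothOrder_zero {T r s c : ℂ} (hT : T ≠ 0) {b : LaurentSeries ℂ}
    (h₀ : single (-2) T ^ ((0 : ℤ) + 1) / Dz (single (-2) T) * b
        - ((((0 : ℤ) + 1 : ℤ) : ℂ) * c) • single (-2) T ^ (0 : ℤ)
      = single 0 r + single (-(2 * (0 : ℤ) + 3)) s
        + single (-2 * (0 : ℤ)) (T ^ (0 : ℤ) / 2 * ((1 - 2 * (0 : ℤ) : ℤ) : ℂ) / 2)) :
    single 1 (-(1 / 2)) * b = single 0 (r + 1 / 4 + c) + single (-3) s := by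
  have hc : (c • 1 : LaurentSeries ℂ) = single 0 c := by
    rw [← single_zero_one, smul_single, smul_eq_mul, mul_one]
  rw [zpow_div_Dz_single_neg_two hT] at h₀
  norm_num [hc] at h₀
  rw [single_neg, single_add, single_add]
  linear_combination h₀

lemma zerothOrder_single_neg_two {T : ℂ} (hT : T ≠ 0) (c : ℂ) {b : LaurentSeries ℂ} {β γ : ℂ}
    (hb : single 1 (-(1 / 2)) * b = single 0 β + single (-3) γ) (i : ℤ) :
    single (-2) T ^ (i + 1) / Dz (single (-2) T) * b - (((i + 1 : ℤ) : ℂ) * c) • single (-2) T ^ i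
      = single (-2 * i) (T ^ i * (β - (i + 1) * c)) + single (-(2 * i + 3)) (T ^ i * γ) := by
  have hG : single (1 - 2 * i) (-(T ^ i / 2)) = single (-2 * i) (T ^ i) * single 1 (-(1 / 2)) := by
    rw [single_mul_single]
    congr 2 <;> ring
  rw [zpow_div_Dz_single_neg_two hT, hG, mul_assoc, hb, single_zpow, smul_single, mul_add,
    single_mul_single, single_mul_single, add_zero, smul_eq_mul, smul_eq_mul, mul_comm i,
    show -2 * i + -3 = -(2 * i + 3) by ring, mul_sub, single_sub,
    show ((i + 1 : ℤ) : ℂ) * c * T ^ i = T ^ i * ((i + 1) * c) by push_cast; ring]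
  abel

lemma eq_of_single_add_single_eq {i : ℤ} {v w x y u : ℂ}
    (h : single (-2 * i) v + single (-(2 * i + 3)) w
      = single 0 x + single (-(2 * i + 3)) y + single (-2 * i) u) :
    w = y ∧ (i ≠ 0 → v = u ∧ x = 0) := by
  have hcoeff := fun n => congrArg (fun f : LaurentSeries ℂ => f.coeff n) h
  simp only [coeff_add, coeff_single] at hcoeff
  have h₁ : -(2 * i + 3) ≠ -2 * i := by omega
  have h₂ : -(2 * i + 3) ≠ 0 := by omega
  refine ⟨?_, fun hi => ⟨?_, ?_⟩⟩
  · simpa only [if_pos, if_neg h₁, if_neg h₂, zero_add, add_zero] using hcoeff (-(2 * i + 3))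
  · have h₃ : -2 * i ≠ 0 := by omega
    simpa only [if_pos, if_neg h₁.symm, if_neg h₃, zero_add, add_zero] using hcoeff (-2 * i)
  · have h₃ : (0 : ℤ) ≠ -2 * i := by omega
    simpa only [if_pos, if_neg h₂.symm, if_neg h₃, zero_add, add_zero, eq_comm] using hcoeff 0

lemma eq_of_single_one_mul_eq {b : LaurentSeries ℂ} {β γ : ℂ}
    (hb : single 1 (-(1 / 2)) * b = single 0 β + single (-3) γ) :
    b = single (-1) (-2 * β) + single (-4) (-2 * γ) := by
  have hz : (single 1 (-(1 / 2)) : LaurentSeries ℂ) ≠ 0 := single_ne_zero (by norm_num)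
  rw [← inv_mul_cancel_left₀ hz b, hb, inv_single, mul_add, single_mul_single, single_mul_single]
  norm_num

theorem sigma_classification_general
    (σ : ℤ → (LaurentSeries ℂ →ₗ[ℂ] LaurentSeries ℂ))
    (r s t : ℤ → ℂ)
    (hform : ∀ i : ℤ, -1 ≤ i →
      σ i = r i • LinearMap.id + s i • zPow (-(2 * i + 3))
        + t i • (zPow (-2 * i) ∘ₗ (zDz + (((1 - 2 * i : ℤ) : ℂ)/2) • LinearMap.id)))
    (h : LaurentSeries ℂ) (c : ℂ) (b : LaurentSeries ℂ) (hd : Dz h ≠ 0)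
    (harise : ∀ i : ℤ, -1 ≤ i → σ i = sigmaHCB h c b i) :
    ∃ S T : ℂ, T ≠ 0 ∧
      (∀ i : ℤ, -1 ≤ i →
        σ i = (T ^ i) • (((1 : ℂ)/2) •
            (zPow (-2 * i) ∘ₗ (zDz + (((1 - 2 * i : ℤ) : ℂ)/2) • LinearMap.id))
          + S • zPow (-2 * i - 3))) ∧
      h = T • HahnSeries.single (-2 : ℤ) (1 : ℂ) ∧
      c = 1/2 ∧
      (∀ i : ℤ, -1 ≤ i → r i = 0) ∧
      b = (-(3 : ℂ)/2) • HahnSeries.single (-1 : ℤ) (1 : ℂ)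
        - (2 * S) • HahnSeries.single (-4 : ℤ) (1 : ℂ) := by
  have key := fun i hi => sigmaHCB_eq_sigmaRST_iff.mp ((harise i hi).symm.trans (hform i hi))
  obtain ⟨T, hT, rfl, ht⟩ := exists_eq_single_neg_two hd fun i hi => (key i hi).1
  have hzero := fun i hi => ht i hi ▸ (key i hi).2
  have hb := single_mul_eq_of_zerothOrder_zero hT (hzero 0 (by norm_num))
  have hm := fun i hi => eq_of_single_add_single_eq <|
    (zerothOrder_single_neg_two hT c hb i).symm.trans (hzero i hi)
  have e₁ := ((hm 1 (by norm_num)).2 one_ne_zero).1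
  have e₂ := ((hm (-1) le_rfl).2 (by norm_num)).1
  norm_num at e₁ e₂
  have hdiff : r 0 - c = -1 / 2 := mul_left_cancel₀ hT (by linear_combination e₁)
  have hsum : r 0 + c = 1 / 2 := mul_left_cancel₀ (inv_ne_zero hT) (by linear_combination e₂)
  have hc : c = 1 / 2 := by linear_combination (hsum - hdiff) / 2
  have hr : ∀ i, -1 ≤ i → r i = 0 := fun i hi => by
    rcases eq_or_ne i 0 with rfl | hi₀
    · linear_combination (hsum + hdiff) / 2
    · exact ((hm i hi).2 hi₀).2
  refine ⟨s 0, T, hT, fun i hi => ?_, by rw [smul_single, smul_eq_mul, mul_one], hc, hr, ?_⟩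
  · rw [hform i hi, hr i hi, ← (hm i hi).1, ht i hi, show -(2 * i + 3) = -2 * i - 3 by ring]
    module
  · rw [eq_of_single_one_mul_eq hb, hr 0 (by norm_num), hc]
    norm_num [smul_single, single_neg, sub_eq_add_neg]

/-- Lemma 3.6 (lem:sigma): a Lie algebra homomorphism `σ : W_> → Diff¹(ℂ((z)))` with
`σ(L_i) = r_i·1 + s_i·z^{-(2i+3)} + t_i·z^{-2i}(z∂_z + (1-2i)/2)`, `t_0 ≠ 0`, arising
from data `(h, c, b)`, must be of the form
`σ(L_i) = t^i ((1/2) z^{-2i}(z∂_z + (1-2i)/2) + s z^{-2i-3})`; in particular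
`h = t z^{-2}`, `c = 1/2`, `r_i = 0` and `b = -(3/2) z^{-1} - 2s z^{-4}`. -/
theorem sigma_classification
    (σ : ℤ → (LaurentSeries ℂ →ₗ[ℂ] LaurentSeries ℂ))
    (hhom : ∀ i j : ℤ, -1 ≤ i → -1 ≤ j →
      σ i ∘ₗ σ j - σ j ∘ₗ σ i = ((i - j : ℤ) : ℂ) • σ (i + j))
    (r s t : ℤ → ℂ)
    (hform : ∀ i : ℤ, -1 ≤ i →
      σ i = r i • LinearMap.id + s i • zPow (-(2 * i + 3))
        + t i • (zPow (-2 * i) ∘ₗ (zDz + (((1 - 2 * i : ℤ) : ℂ)/2) • LinearMap.id)))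
    (ht0 : t 0 ≠ 0)
    (h : LaurentSeries ℂ) (c : ℂ) (b : LaurentSeries ℂ) (hd : Dz h ≠ 0)
    (harise : ∀ i : ℤ, -1 ≤ i → σ i = sigmaHCB h c b i) :
    ∃ S T : ℂ, T ≠ 0 ∧
      (∀ i : ℤ, -1 ≤ i →
        σ i = (T ^ i) • (((1 : ℂ)/2) •
            (zPow (-2 * i) ∘ₗ (zDz + (((1 - 2 * i : ℤ) : ℂ)/2) • LinearMap.id))
          + S • zPow (-2 * i - 3))) ∧
      h = T • HahnSeries.single (-2 : ℤ) (1 : ℂ) ∧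
      c = 1/2 ∧
      (∀ i : ℤ, -1 ≤ i → r i = 0) ∧
      b = (-(3 : ℂ)/2) • HahnSeries.single (-1 : ℤ) (1 : ℂ)
        - (2 * S) • HahnSeries.single (-4 : ℤ) (1 : ℂ) :=
  sigma_classification_general σ r s t hform h c b hd harise
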